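/- If a row of nonnegative integers (M_1, ..., M_N) with sum S divisible by N evolves by the max-to-min transfer rule (decrement a maximal entry, increment a minimal entry, whenever max − min ≥ 2), then after finitely many steps all entries equal S/N. -/
import Mathlib

open Finset

private lemma sum_split_two {N : ℕ} (g : Fin N → ℕ) {j k : Fin N} (hjk : j ≠ k) :
    ∑ l, g l = g j + g k + ∑ l ∈ (Finset.univ.erase j).erase k, g l := by
  rw [← Finset.add_sum_erase _ g (Finset.mem_univ j),
      ← Finset.add_sum_erase _ g (Finset.mem_erase.mpr ⟨hjk.symm, Finset.mem_univ k⟩),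
      add_assoc]

/-- A row of natural numbers with sum divisible by N, evolving by the
max-to-min transfer rule (decrement a maximal entry and increment a minimal
entry whenever max − min ≥ 2), reaches the constant row S/N after finitely
many steps. -/
theorem max_to_min_transfer_terminates_uniform (N : ℕ) (hN : 0 < N)
    (M : Fin N → ℕ) (hdvd : N ∣ ∑ l, M l)
    (f : ℕ → Fin N → ℕ) (hf0 : f 0 = M)
    (hstep : ∀ t,
      (∃ j k, (∀ l, f t l ≤ f t j) ∧ (∀ l, f t k ≤ f t l) ∧
        f t k + 2 ≤ f t j ∧
        f (t + 1) = Function.update (Function.update (f t) j (f t j - 1)) k (f t k + 1)) ∨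
      ((∀ j k, f t j ≤ f t k + 1) ∧ f (t + 1) = f t)) :
    ∃ T, ∀ t ≥ T, ∀ l, f t l = (∑ m, M m) / N := by
  -- Facts about a single nontrivial step
  have stepfact : ∀ t j k, (f t k + 2 ≤ f t j) →
      f (t + 1) = Function.update (Function.update (f t) j (f t j - 1)) k (f t k + 1) →
      (∑ l, f (t+1) l = ∑ l, f t l) ∧ (∑ l, (f (t+1) l)^2 < ∑ l, (f t l)^2) := by
    intro t j k hle heq
    have hjk : j ≠ k := by
      intro h; rw [h] at hle; omega
    have hj : f (t+1) j = f t j - 1 := by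
      rw [heq, Function.update_of_ne hjk, Function.update_self]
    have hk : f (t+1) k = f t k + 1 := by
      rw [heq, Function.update_self]
    have hrest : ∀ l, l ≠ j → l ≠ k → f (t+1) l = f t l := by
      intro l hlj hlk
      rw [heq, Function.update_of_ne hlk, Function.update_of_ne hlj]
    have hrest_sum : ∀ (φ : ℕ → ℕ),
        ∑ l ∈ (Finset.univ.erase j).erase k, φ (f (t+1) l)
          = ∑ l ∈ (Finset.univ.erase j).erase k, φ (f t l) := by
      intro φ
      refine Finset.sum_congr rfl ?_
      intro l hl
      rw [Finset.mem_erase, Finset.mem_erase] at hl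
      rw [hrest l hl.2.1 hl.1]
    constructor
    · have h1 := sum_split_two (f (t+1)) hjk
      have h2 := sum_split_two (f t) hjk
      rw [h1, h2, hj, hk, hrest_sum (fun x => x)]
      omega
    · have h1 := sum_split_two (fun l => (f (t+1) l)^2) hjk
      have h2 := sum_split_two (fun l => (f t l)^2) hjk
      rw [h1, h2, hj, hk, hrest_sum (fun x => x^2)]
      have hge2 : 2 ≤ f t j := by omega
      obtain ⟨a, ha⟩ : ∃ a, f t j = a + 1 := ⟨f t j - 1, by omega⟩
      have hab : f t k + 1 ≤ a := by omega
      rw [ha]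
      simp only [Nat.add_sub_cancel]
      have : a^2 + (f t k + 1)^2 < (a+1)^2 + (f t k)^2 := by nlinarith
      omega
  -- sum invariance
  have hsum : ∀ t, ∑ l, f t l = ∑ m, M m := by
    intro t
    induction t with
    | zero => rw [hf0]
    | succ n ih =>
      rcases hstep n with ⟨j, k, _, _, hle, heq⟩ | ⟨_, heq⟩
      · rw [(stepfact n j k hle heq).1, ih]
      · rw [heq, ih]
  -- there is a stable time
  have hex : ∃ T, ∀ j k, f T j ≤ f T k + 1 := by
    by_contra hcon
    push_neg at hcon
    have hdec : ∀ t, ∑ l, (f (t+1) l)^2 < ∑ l, (f t l)^2 := by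
      intro t
      rcases hstep t with ⟨j, k, _, _, hle, heq⟩ | ⟨hstab, _⟩
      · exact (stepfact t j k hle heq).2
      · obtain ⟨j, k, hjk⟩ := hcon t
        exact absurd (hstab j k) (by omega)
    have key : ∀ n, ∑ l, (f n l)^2 + n ≤ ∑ l, (f 0 l)^2 := by
      intro n
      induction n with
      | zero => omega
      | succ m ih => have := hdec m; omega
    have := key (∑ l, (f 0 l)^2 + 1)
    omega
  obtain ⟨T, hT⟩ := hex
  -- f is constant from T on
  have hconst : ∀ t, T ≤ t → f t = f T := by
    intro t ht
    induction t with
    | zero => rw [Nat.le_zero.mp ht]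
    | succ n ih =>
      rcases Nat.lt_or_ge n T with h | h
      · have : T = n + 1 := by omega
        rw [this]
      · have hn := ih h
        rcases hstep n with ⟨j, k, _, _, hle, _⟩ | ⟨_, heq⟩
        · rw [hn] at hle
          exact absurd (hT j k) (by omega)
        · rw [heq, hn]
  -- stable + divisible sum ⇒ all entries equal S/N
  set g := f T with hg
  have hsg : ∑ l, g l = ∑ m, M m := hsum T
  have hne : (Finset.univ : Finset (Fin N)).Nonempty := ⟨⟨0, hN⟩, Finset.mem_univ _⟩
  obtain ⟨l₀, -, hmin⟩ := Finset.exists_min_image Finset.univ g hne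
  set m := g l₀ with hm
  have hlb : ∀ l, m ≤ g l := fun l => hmin l (Finset.mem_univ l)
  have hub : ∀ l, g l ≤ m + 1 := fun l => hT l l₀
  have hge : N * m ≤ ∑ l, g l := by
    calc N * m = ∑ _l : Fin N, m := by simp [Finset.sum_const, Finset.card_univ, mul_comm]
    _ ≤ ∑ l, g l := Finset.sum_le_sum (fun l _ => hlb l)
  have hlt : ∑ l, g l < N * (m + 1) := by
    calc ∑ l, g l < ∑ _l : Fin N, (m + 1) :=
          Finset.sum_lt_sum (fun l _ => hub l) ⟨l₀, Finset.mem_univ l₀, by omega⟩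
    _ = N * (m + 1) := by simp [Finset.sum_const, Finset.card_univ, mul_comm]
  have hdvd' : N ∣ ∑ l, g l := hsg ▸ hdvd
  obtain ⟨q, hq⟩ := hdvd'
  have hqm : q = m := by
    rw [hq] at hge hlt
    have h1 : m ≤ q := Nat.le_of_mul_le_mul_left hge hN
    have h2 : q < m + 1 := Nat.lt_of_mul_lt_mul_left hlt
    omega
  have hSm : ∑ l, g l = N * m := by rw [hq, hqm]
  have hall : ∀ l, g l = m := by
    intro l
    by_contra hne'
    have h2 : N * m < ∑ l, g l := by
      calc N * m = ∑ _l : Fin N, m := by simp [Finset.sum_const, Finset.card_univ, mul_comm]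
      _ < ∑ l, g l :=
          Finset.sum_lt_sum (fun i _ => hlb i) ⟨l, Finset.mem_univ l, by have := hlb l; omega⟩
    omega
  have hdiv : (∑ m', M m') / N = m := by
    rw [← hsg, hSm, Nat.mul_div_cancel_left _ hN]
  exact ⟨T, fun t ht l => by rw [hconst t ht, hdiv]; exact hall l⟩
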